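/- Under the same wide-sense regenerative structure started from an arbitrary point x: if E_x[∑_{j=0}^{τ−1} f(X_j)] ≤ K_x and E_φ[∑_{j=0}^{τ−1} f(X_j)] ≤ δ, then E_x f(X_n) ≤ K_x + δ for every n ≥ 0. -/

import Mathlib

/-!
Conditioning on the value `k` of the regeneration time `τ` and using that `τ` is independent of
the post-`τ` path, `E_x f(X_n)` splits as the pre-regeneration part `E_x[f(X_n); n < τ] ≤ K` plus
`∑_{k ≤ n} P_x(τ = k) E_φ f(Y_{n-k})`, which is at most `sup_m E_φ f(Y_m)` because the masses
`P_x(τ = k)` sum to at most one. The same decomposition for the `φ`-chain, which regenerates into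
itself at a time `σ ≥ 1`, bounds `E_φ f(Y_m)` by strong induction on `m` by
`∑_{j ≤ m} E_φ[f(Y_j); j < σ] ≤ δ`.
-/

open MeasureTheory ProbabilityTheory Finset
open scoped ENNReal

theorem ProbabilityTheory.IndepFun.setLIntegral_preimage_eq_mul
    {Ω α β : Type*} [MeasurableSpace Ω] [MeasurableSpace α] [MeasurableSpace β]
    {μ : Measure Ω} {T : Ω → α} {W : Ω → β} (hTW : IndepFun T W μ)
    (hT : Measurable T) (hW : Measurable W) {s : Set α} (hs : MeasurableSet s)
    {g : β → ℝ≥0∞} (hg : Measurable g) :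
    ∫⁻ ω in T ⁻¹' s, g (W ω) ∂μ = μ (T ⁻¹' s) * ∫⁻ ω, g (W ω) ∂μ := by
  have h1 : Measurable (s.indicator (1 : α → ℝ≥0∞)) := measurable_one.indicator hs
  calc ∫⁻ ω in T ⁻¹' s, g (W ω) ∂μ
        = ∫⁻ ω, ((s.indicator (1 : α → ℝ≥0∞) ∘ T) * (g ∘ W)) ω ∂μ := by
        rw [← lintegral_indicator (hT hs)]
        congr with ω
        by_cases h : T ω ∈ s <;> simp [h]
    _ = (∫⁻ ω, (s.indicator (1 : α → ℝ≥0∞) ∘ T) ω ∂μ) * ∫⁻ ω, g (W ω) ∂μ :=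
        lintegral_mul_eq_lintegral_mul_lintegral_of_indepFun (h1.comp hT) (hg.comp hW)
          (hTW.comp h1 hg)
    _ = μ (T ⁻¹' s) * ∫⁻ ω, g (W ω) ∂μ := by
        rw [← lintegral_indicator_one (hT hs)]
        rfl

theorem sum_measure_preimage_singleton_le_one {Ω β : Type*} [MeasurableSpace Ω]
    [MeasurableSpace β] [MeasurableSingletonClass β] {μ : Measure Ω} [IsProbabilityMeasure μ]
    {T : Ω → β} (hT : Measurable T) (s : Finset β) :
    ∑ b ∈ s, μ (T ⁻¹' {b}) ≤ 1 := by
  rw [sum_measure_preimage_singleton s fun b _ => hT (measurableSet_singleton b)]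
  exact prob_le_one

section Regeneration

variable {Ω Ω' S : Type*} [MeasurableSpace Ω] [MeasurableSpace Ω'] [MeasurableSpace S]
  {μ : Measure Ω} {ν : Measure Ω'} {X : ℕ → Ω → S} {Z : ℕ → Ω' → S} {τ : Ω → ℕ}
  {f : S → ℝ≥0∞}

theorem measurable_shift (hX : ∀ n, Measurable (X n)) (hτ : Measurable τ) :
    Measurable fun ω n => X (τ ω + n) ω :=
  measurable_pi_lambda _ fun n =>
    (measurable_from_prod_countable_left (fun k => hX (k + n)) :
      Measurable fun p : Ω × ℕ => X (p.2 + n) p.1).comp (measurable_id.prodMk hτ)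

theorem lintegral_eq_setLIntegral_Ioi_add_sum_setLIntegral_fiber (hτ : Measurable τ)
    (g : Ω → ℝ≥0∞) (n : ℕ) :
    ∫⁻ ω, g ω ∂μ = ∫⁻ ω in τ ⁻¹' Set.Ioi n, g ω ∂μ
      + ∑ k ∈ range (n + 1), ∫⁻ ω in τ ⁻¹' {k}, g ω ∂μ := by
  have hcompl : (τ ⁻¹' Set.Ioi n)ᶜ = ⋃ k ∈ range (n + 1), τ ⁻¹' {k} := by
    ext ω; simp
  rw [← lintegral_add_compl g (hτ measurableSet_Ioi), hcompl,
    lintegral_biUnion_finset (Set.pairwiseDisjoint_fiber τ _) fun k _ =>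
      hτ (measurableSet_singleton k)]

theorem lintegral_shift_eq_of_map_eq (hX : ∀ n, Measurable (X n)) (hτ : Measurable τ)
    (hZ : ∀ n, Measurable (Z n))
    (hpost : μ.map (fun ω n => X (τ ω + n) ω) = ν.map (fun ω' n => Z n ω'))
    (hf : Measurable f) (m : ℕ) :
    ∫⁻ ω, f (X (τ ω + m) ω) ∂μ = ∫⁻ ω', f (Z m ω') ∂ν :=
  (IdentDistrib.comp ⟨(measurable_shift hX hτ).aemeasurable,
    (measurable_pi_lambda _ hZ).aemeasurable, hpost⟩
      (hf.comp (measurable_pi_apply m))).lintegral_eq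

theorem lintegral_eq_of_regeneration (hX : ∀ n, Measurable (X n)) (hτ : Measurable τ)
    (hZ : ∀ n, Measurable (Z n)) (hindep : IndepFun τ (fun ω n => X (τ ω + n) ω) μ)
    (hpost : μ.map (fun ω n => X (τ ω + n) ω) = ν.map (fun ω' n => Z n ω'))
    (hf : Measurable f) (n : ℕ) :
    ∫⁻ ω, f (X n ω) ∂μ = ∫⁻ ω in τ ⁻¹' Set.Ioi n, f (X n ω) ∂μ
      + ∑ k ∈ range (n + 1), μ (τ ⁻¹' {k}) * ∫⁻ ω', f (Z (n - k) ω') ∂ν := by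
  rw [lintegral_eq_setLIntegral_Ioi_add_sum_setLIntegral_fiber hτ _ n]
  congr 1
  refine sum_congr rfl fun k hk => ?_
  have hX_eq : ∀ ω ∈ τ ⁻¹' {k}, f (X n ω) = f (X (τ ω + (n - k)) ω) := by
    intro ω (hω : τ ω = k)
    rw [hω, Nat.add_sub_cancel' (Nat.lt_succ_iff.mp (mem_range.mp hk))]
  rw [setLIntegral_congr_fun (hτ (measurableSet_singleton k)) hX_eq,
    ← lintegral_shift_eq_of_map_eq hX hτ hZ hpost hf]
  exact hindep.setLIntegral_preimage_eq_mul hτ (measurable_shift hX hτ)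
    (measurableSet_singleton k) (hf.comp (measurable_pi_apply (n - k)))

theorem sum_setLIntegral_Ioi_le_lintegral_sum_range (hX : ∀ n, Measurable (X n))
    (hτ : Measurable τ) (hf : Measurable f) (s : Finset ℕ) :
    ∑ j ∈ s, ∫⁻ ω in τ ⁻¹' Set.Ioi j, f (X j ω) ∂μ
      ≤ ∫⁻ ω, ∑ j ∈ range (τ ω), f (X j ω) ∂μ := by
  simp_rw [← lintegral_indicator (hτ measurableSet_Ioi)]
  rw [← lintegral_finsetSum _ fun j _ =>
    (show Measurable fun ω => f (X j ω) from hf.comp (hX j)).indicator (hτ measurableSet_Ioi)]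
  refine lintegral_mono fun ω => ?_
  simp only [Set.indicator, Set.mem_preimage, Set.mem_Ioi]
  rw [← sum_filter]
  exact sum_le_sum_of_subset fun j hj => mem_range.mpr (mem_filter.mp hj).2

theorem lintegral_le_of_regeneration [IsProbabilityMeasure μ] (hX : ∀ n, Measurable (X n))
    (hτ : Measurable τ) (hZ : ∀ n, Measurable (Z n))
    (hindep : IndepFun τ (fun ω n => X (τ ω + n) ω) μ)
    (hpost : μ.map (fun ω n => X (τ ω + n) ω) = ν.map (fun ω' n => Z n ω'))
    (hf : Measurable f) {δ : ℝ≥0∞} (hZδ : ∀ m, ∫⁻ ω', f (Z m ω') ∂ν ≤ δ) (n : ℕ) :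
    ∫⁻ ω, f (X n ω) ∂μ ≤ ∫⁻ ω, ∑ j ∈ range (τ ω), f (X j ω) ∂μ + δ := by
  rw [lintegral_eq_of_regeneration hX hτ hZ hindep hpost hf n]
  refine add_le_add ?_ ?_
  · simpa using sum_setLIntegral_Ioi_le_lintegral_sum_range (μ := μ) hX hτ hf {n}
  · calc ∑ k ∈ range (n + 1), μ (τ ⁻¹' {k}) * ∫⁻ ω', f (Z (n - k) ω') ∂ν
        ≤ ∑ k ∈ range (n + 1), μ (τ ⁻¹' {k}) * δ := by gcongr; exact hZδ _
      _ = (∑ k ∈ range (n + 1), μ (τ ⁻¹' {k})) * δ := (sum_mul ..).symm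
      _ ≤ δ := mul_le_of_le_one_left' (sum_measure_preimage_singleton_le_one hτ _)

theorem lintegral_le_of_self_regeneration [IsProbabilityMeasure μ] (hX : ∀ n, Measurable (X n))
    (hτ : Measurable τ) (hτ1 : ∀ ω, 1 ≤ τ ω)
    (hindep : IndepFun τ (fun ω n => X (τ ω + n) ω) μ)
    (hpost : μ.map (fun ω n => X (τ ω + n) ω) = μ.map (fun ω n => X n ω))
    (hf : Measurable f) (m : ℕ) :
    ∫⁻ ω, f (X m ω) ∂μ ≤ ∫⁻ ω, ∑ j ∈ range (τ ω), f (X j ω) ∂μ := by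
  set b : ℕ → ℝ≥0∞ := fun j => ∫⁻ ω in τ ⁻¹' Set.Ioi j, f (X j ω) ∂μ
  suffices h : ∀ m, ∫⁻ ω, f (X m ω) ∂μ ≤ ∑ j ∈ range (m + 1), b j from
    (h m).trans (sum_setLIntegral_Ioi_le_lintegral_sum_range hX hτ hf _)
  have hτ0 : μ (τ ⁻¹' {0}) = 0 := by
    rw [show τ ⁻¹' {0} = ∅ from
      Set.eq_empty_of_forall_notMem fun ω hω => Nat.one_le_iff_ne_zero.mp (hτ1 ω) hω,
      measure_empty]
  refine fun m => Nat.strong_induction_on m fun m ih => ?_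
  have hterm : ∀ k ∈ range (m + 1), μ (τ ⁻¹' {k}) * ∫⁻ ω, f (X (m - k) ω) ∂μ
      ≤ μ (τ ⁻¹' {k}) * ∑ j ∈ range m, b j := by
    intro k hk
    have hkm := mem_range.mp hk
    rcases k.eq_zero_or_pos with rfl | hk0
    · simp [hτ0]
    · gcongr
      exact (ih (m - k) (by omega)).trans
        (sum_le_sum_of_subset (range_subset_range.mpr (by omega)))
  calc ∫⁻ ω, f (X m ω) ∂μ
      = b m + ∑ k ∈ range (m + 1), μ (τ ⁻¹' {k}) * ∫⁻ ω, f (X (m - k) ω) ∂μ :=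
        lintegral_eq_of_regeneration hX hτ hX hindep hpost hf m
    _ ≤ b m + (∑ k ∈ range (m + 1), μ (τ ⁻¹' {k})) * ∑ j ∈ range m, b j := by
        rw [sum_mul]
        gcongr b m + ?_
        exact sum_le_sum hterm
    _ ≤ b m + ∑ j ∈ range m, b j := by
        gcongr
        exact mul_le_of_le_one_left' (sum_measure_preimage_singleton_le_one hτ _)
    _ = ∑ j ∈ range (m + 1), b j := by rw [sum_range_succ, add_comm]

end Regeneration

theorem marginal_expectation_bound_from_point_general
    {Ω Ω' S : Type*} [MeasurableSpace Ω] [MeasurableSpace Ω'] [MeasurableSpace S]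
    (μx : Measure Ω) [IsProbabilityMeasure μx]
    (μφ : Measure Ω') [IsProbabilityMeasure μφ]
    (X : ℕ → Ω → S) (hX : ∀ n, Measurable (X n))
    (Y : ℕ → Ω' → S) (hY : ∀ n, Measurable (Y n))
    (τ : Ω → ℕ) (hτ : Measurable τ)
    (σ : Ω' → ℕ) (hσ : Measurable σ) (hσ1 : ∀ ω', 1 ≤ σ ω')
    -- regeneration of the `x`-chain into the `φ`-chain:
    (hindepX : IndepFun
      (fun ω => ((fun i => X (min i (τ ω)) ω, τ ω) : (ℕ → S) × ℕ))
      (fun ω => (fun n => X (τ ω + n) ω : ℕ → S)) μx)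
    (hpostX : Measure.map (fun ω => (fun n => X (τ ω + n) ω : ℕ → S)) μx
      = Measure.map (fun ω' => (fun n => Y n ω' : ℕ → S)) μφ)
    -- wide-sense regenerative structure of the `φ`-chain:
    (hindepY : IndepFun
      (fun ω' => ((fun i => Y (min i (σ ω')) ω', σ ω') : (ℕ → S) × ℕ))
      (fun ω' => (fun n => Y (σ ω' + n) ω' : ℕ → S)) μφ)
    (hpostY : Measure.map (fun ω' => (fun n => Y (σ ω' + n) ω' : ℕ → S)) μφ
      = Measure.map (fun ω' => (fun n => Y n ω' : ℕ → S)) μφ)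
    (f : S → ℝ≥0∞) (hf : Measurable f) (K δ : ℝ≥0∞)
    (hK : ∫⁻ ω, ∑ j ∈ Finset.range (τ ω), f (X j ω) ∂μx ≤ K)
    (hδ : ∫⁻ ω', ∑ j ∈ Finset.range (σ ω'), f (Y j ω') ∂μφ ≤ δ) :
    ∀ n : ℕ, ∫⁻ ω, f (X n ω) ∂μx ≤ K + δ := by
  have hτX : IndepFun τ (fun ω n => X (τ ω + n) ω) μx := hindepX.comp measurable_snd measurable_id
  have hσY : IndepFun σ (fun ω' n => Y (σ ω' + n) ω') μφ :=
    hindepY.comp measurable_snd measurable_id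
  have hYδ : ∀ m, ∫⁻ ω', f (Y m ω') ∂μφ ≤ δ := fun m =>
    (lintegral_le_of_self_regeneration hY hσ hσ1 hσY hpostY hf m).trans hδ
  intro n
  calc ∫⁻ ω, f (X n ω) ∂μx ≤ ∫⁻ ω, ∑ j ∈ Finset.range (τ ω), f (X j ω) ∂μx + δ :=
        lintegral_le_of_regeneration hX hτ hY hτX hpostX hf hYδ n
    _ ≤ K + δ := add_le_add_left hK δ

/-- Wide-sense regeneration from a point `x`: if the chain started at `x` regenerates at
a randomized time `τ` into the chain `(Y, μφ)` started at `φ` (which is itself wide-sense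
regenerative at a time `σ ≥ 1`), and if `E_x ∑_{j<τ} f(X_j) ≤ K` and
`E_φ ∑_{j<σ} f(Y_j) ≤ δ`, then `E_x f(X_n) ≤ K + δ` for every `n`. -/
theorem marginal_expectation_bound_from_point
    {Ω Ω' S : Type*} [MeasurableSpace Ω] [MeasurableSpace Ω'] [MeasurableSpace S]
    (μx : Measure Ω) [IsProbabilityMeasure μx]
    (μφ : Measure Ω') [IsProbabilityMeasure μφ]
    (X : ℕ → Ω → S) (hX : ∀ n, Measurable (X n))
    (Y : ℕ → Ω' → S) (hY : ∀ n, Measurable (Y n))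
    (τ : Ω → ℕ) (hτ : Measurable τ)
    (σ : Ω' → ℕ) (hσ : Measurable σ) (hσ1 : ∀ ω', 1 ≤ σ ω')
    (x : S) (hstart : ∀ᵐ ω ∂μx, X 0 ω = x)
    (φ : Measure S) [IsProbabilityMeasure φ]
    (hY0 : Measure.map (Y 0) μφ = φ)
    -- regeneration of the `x`-chain into the `φ`-chain:
    (hindepX : IndepFun
      (fun ω => ((fun i => X (min i (τ ω)) ω, τ ω) : (ℕ → S) × ℕ))
      (fun ω => (fun n => X (τ ω + n) ω : ℕ → S)) μx)
    (hpostX : Measure.map (fun ω => (fun n => X (τ ω + n) ω : ℕ → S)) μx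
      = Measure.map (fun ω' => (fun n => Y n ω' : ℕ → S)) μφ)
    -- wide-sense regenerative structure of the `φ`-chain:
    (hindepY : IndepFun
      (fun ω' => ((fun i => Y (min i (σ ω')) ω', σ ω') : (ℕ → S) × ℕ))
      (fun ω' => (fun n => Y (σ ω' + n) ω' : ℕ → S)) μφ)
    (hpostY : Measure.map (fun ω' => (fun n => Y (σ ω' + n) ω' : ℕ → S)) μφ
      = Measure.map (fun ω' => (fun n => Y n ω' : ℕ → S)) μφ)
    (f : S → ℝ≥0∞) (hf : Measurable f) (K δ : ℝ≥0∞)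
    (hK : ∫⁻ ω, ∑ j ∈ Finset.range (τ ω), f (X j ω) ∂μx ≤ K)
    (hδ : ∫⁻ ω', ∑ j ∈ Finset.range (σ ω'), f (Y j ω') ∂μφ ≤ δ) :
    ∀ n : ℕ, ∫⁻ ω, f (X n ω) ∂μx ≤ K + δ :=
  marginal_expectation_bound_from_point_general μx μφ X hX Y hY τ hτ σ hσ hσ1 hindepX hpostX hindepY
    hpostY f hf K δ hK hδ
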